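/- Let H be a self-adjoint operator on a Hilbert space and f ∈ C_0^∞(ℝ) with almost analytic extension f̃ ∈ C_0^∞(ℂ). Then f(H) = −(1/π) ∫_ℂ ∂̄f̃(z) (z − H)^{−1} L(dz), where L(dz) is Lebesgue measure on ℂ. -/

import Mathlib

open MeasureTheory Real
open scoped ENNReal
noncomputable section

/-- ∂̄ = (1/2)(∂_x + i∂_y) of a function on ℂ. -/
def dbar (F : ℂ → ℂ) (z : ℂ) : ℂ :=
  (1/2 : ℂ) * (fderiv ℝ F z 1 + Complex.I * fderiv ℝ F z Complex.I)

theorem setIntegral_prod_symm' {E : Type*} [NormedAddCommGroup E] [NormedSpace ℝ E]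
    (f : ℝ × ℝ → E) {s t : Set ℝ} (hf : IntegrableOn f (s ×ˢ t)) :
    ∫ z in s ×ˢ t, f z = ∫ y in t, ∫ x in s, f (x, y) := by
  rw [Measure.volume_eq_prod] at hf ⊢
  simp only [IntegrableOn, ← Measure.prod_restrict s t] at hf ⊢
  exact integral_prod_symm f hf

theorem setIntegral_prod' {E : Type*} [NormedAddCommGroup E] [NormedSpace ℝ E]
    (f : ℝ × ℝ → E) {s t : Set ℝ} (hf : IntegrableOn f (s ×ˢ t)) :
    ∫ z in s ×ˢ t, f z = ∫ x in s, ∫ y in t, f (x, y) := by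
  rw [Measure.volume_eq_prod] at hf ⊢
  exact setIntegral_prod f hf

set_option maxHeartbeats 1000000 in
theorem pompeiu_zero (G : ℂ → ℂ) (hG : ContDiff ℝ (⊤ : ℕ∞) G) (hGc : HasCompactSupport G) :
    ∫ z : ℂ, dbar G z * z⁻¹ = (-π : ℂ) * G 0 := by
  set D : ℂ → (ℂ →L[ℝ] ℂ) := fderiv ℝ G with hD
  have hDcont : Continuous D := hG.continuous_fderiv (by simp)
  have hDc : HasCompactSupport D := hGc.fderiv ℝ
  obtain ⟨M, hM⟩ := hDc.exists_bound_of_continuous hDcont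
  obtain ⟨R, hR⟩ : ∃ R : ℝ, tsupport G ⊆ Metric.closedBall 0 R :=
    hGc.isCompact.isBounded.subset_closedBall 0
  have hDz : ∀ z : ℂ, z ∉ tsupport G → D z = 0 := by
    intro z hz
    have : z ∉ tsupport (fderiv ℝ G) := fun h => hz (tsupport_fderiv_subset ℝ h)
    exact image_eq_zero_of_notMem_tsupport this
  set e : ℝ → ℂ := fun θ => Complex.exp (θ * Complex.I) with he
  have hce : Continuous e := Complex.continuous_exp.comp
    (Complex.continuous_ofReal.mul continuous_const)
  have he_norm : ∀ θ, ‖e θ‖ = 1 := by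
    intro θ; simp [he, Complex.norm_exp]
  have he_ne : ∀ θ, e θ ≠ 0 := fun θ => Complex.exp_ne_zero _
  set d₁ : ℝ × ℝ → ℂ := fun p => D ((p.1 : ℂ) * e p.2) (e p.2) with hd₁
  set d₂ : ℝ × ℝ → ℂ := fun p => Complex.I * D ((p.1 : ℂ) * e p.2) (Complex.I * e p.2) with hd₂
  set T : Set (ℝ × ℝ) := Set.Ioi (0:ℝ) ×ˢ Set.Ioo (-π) π with hT
  have hTmeas : MeasurableSet T := measurableSet_Ioi.prod measurableSet_Ioo
  have hsymm : ∀ p : ℝ × ℝ, Complex.polarCoord.symm p = (p.1 : ℂ) * e p.2 := by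
    intro p
    rw [Complex.polarCoord_symm_apply, he]
    push_cast [Complex.exp_mul_I]
    ring
  -- pointwise identity on T
  have key : ∀ p ∈ T, p.1 • (dbar G (Complex.polarCoord.symm p) * (Complex.polarCoord.symm p)⁻¹)
      = (1/2 : ℂ) * (d₁ p + d₂ p) := by
    rintro ⟨r, θ⟩ ⟨hr, hθ⟩
    have hr0 : r ≠ 0 := ne_of_gt hr
    have hrC : (r:ℂ) ≠ 0 := Complex.ofReal_ne_zero.mpr hr0
    have hu : e θ = (Real.cos θ : ℂ) + (Real.sin θ : ℂ) * Complex.I := by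
      show Complex.exp _ = _
      rw [Complex.exp_mul_I]; push_cast; ring
    have hone : ((Real.sin θ:ℂ))^2 + ((Real.cos θ:ℂ))^2 = 1 := by
      norm_cast
      exact_mod_cast Real.sin_sq_add_cos_sq θ
    have hinv : (e θ)⁻¹ = (Real.cos θ : ℂ) - (Real.sin θ:ℂ) * Complex.I := by
      apply inv_eq_of_mul_eq_one_right
      rw [hu]
      linear_combination (-(Real.sin θ:ℂ)^2) * Complex.I_sq + hone
    set L := D ((r:ℂ) * e θ) with hL
    have hdec1 : e θ = (Real.cos θ : ℝ) • (1:ℂ) + (Real.sin θ : ℝ) • Complex.I := by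
      rw [hu]; simp [Complex.real_smul]
    have hdec2 : Complex.I * e θ = (-Real.sin θ : ℝ) • (1:ℂ) + (Real.cos θ : ℝ) • Complex.I := by
      rw [hu]
      simp only [Complex.real_smul]
      push_cast
      linear_combination (Complex.sin (θ:ℂ)) * Complex.I_sq
    have h1 : L (e θ) = (Real.cos θ : ℝ) • L 1 + (Real.sin θ : ℝ) • L Complex.I := by
      rw [hdec1, map_add, ContinuousLinearMap.map_smul, ContinuousLinearMap.map_smul]
    have h2 : L (Complex.I * e θ) = (-Real.sin θ : ℝ) • L 1 + (Real.cos θ : ℝ) • L Complex.I := by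
      rw [hdec2, map_add, ContinuousLinearMap.map_smul, ContinuousLinearMap.map_smul]
    show (r : ℝ) • (dbar G (Complex.polarCoord.symm (r, θ)) * (Complex.polarCoord.symm (r, θ))⁻¹)
        = (1/2 : ℂ) * (L (e θ) + Complex.I * L (Complex.I * e θ))
    rw [hsymm (r, θ)]
    show (r : ℝ) • (dbar G ((r:ℂ) * e θ) * ((r:ℂ) * e θ)⁻¹)
        = (1/2 : ℂ) * (L (e θ) + Complex.I * L (Complex.I * e θ))
    rw [h1, h2, dbar, mul_inv, hinv]
    have hfd : fderiv ℝ G ((r:ℂ) * e θ) = L := rfl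
    rw [hfd]
    simp only [Complex.real_smul, smul_eq_mul]
    push_cast
    field_simp
    linear_combination (-(L Complex.I * Complex.sin (θ:ℂ))) * Complex.I_sq
  -- bounds and support
  have hM0 : 0 ≤ M := le_trans (norm_nonneg _) (hM 0)
  have hcc : Continuous (fun p : ℝ × ℝ => (p.1 : ℂ) * e p.2) :=
    (Complex.continuous_ofReal.comp continuous_fst).mul (hce.comp continuous_snd)
  have hcont₁ : Continuous d₁ :=
    Continuous.clm_apply (hDcont.comp hcc) (hce.comp continuous_snd)
  have hcont₂ : Continuous d₂ :=
    continuous_const.mul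
      (Continuous.clm_apply (hDcont.comp hcc) (continuous_const.mul (hce.comp continuous_snd)))
  have habs₁ : ∀ p : ℝ × ℝ, ‖d₁ p‖ ≤ M := by
    intro p
    calc ‖d₁ p‖ ≤ ‖D ((p.1:ℂ) * e p.2)‖ * ‖e p.2‖ := ContinuousLinearMap.le_opNorm _ _
    _ ≤ M * 1 := mul_le_mul (hM _) (le_of_eq (by simp [he_norm])) (norm_nonneg _) hM0
    _ = M := mul_one M
  have habs₂ : ∀ p : ℝ × ℝ, ‖d₂ p‖ ≤ M := by
    intro p
    calc ‖d₂ p‖ = ‖D ((p.1:ℂ) * e p.2) (Complex.I * e p.2)‖ := by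
          rw [hd₂]; simp [norm_mul]
    _ ≤ ‖D ((p.1:ℂ) * e p.2)‖ * ‖Complex.I * e p.2‖ := ContinuousLinearMap.le_opNorm _ _
    _ ≤ M * 1 := mul_le_mul (hM _) (le_of_eq (by simp [norm_mul, he_norm])) (norm_nonneg _) hM0
    _ = M := mul_one M
  have hzero : ∀ p : ℝ × ℝ, R < |p.1| → D ((p.1:ℂ) * e p.2) = 0 := by
    intro p hp
    apply hDz
    intro hmem
    have := hR hmem
    rw [Metric.mem_closedBall, dist_zero_right] at this
    rw [norm_mul, he_norm, mul_one, Complex.norm_real, Real.norm_eq_abs] at this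
    linarith
  have hzero₁ : ∀ p : ℝ × ℝ, R < |p.1| → d₁ p = 0 := by
    intro p hp; rw [hd₁]; simp only [hzero p hp, ContinuousLinearMap.zero_apply]
  have hzero₂ : ∀ p : ℝ × ℝ, R < |p.1| → d₂ p = 0 := by
    intro p hp; rw [hd₂]; simp only [hzero p hp, ContinuousLinearMap.zero_apply, mul_zero]
  -- integrability on T
  have hSfin : volume (Set.Ioc (0:ℝ) R ×ˢ Set.Ioo (-π) π) < ⊤ := by
    rw [Measure.volume_eq_prod, Measure.prod_prod, Real.volume_Ioc, Real.volume_Ioo]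
    exact ENNReal.mul_lt_top ENNReal.ofReal_lt_top ENNReal.ofReal_lt_top
  have hintT : ∀ d : ℝ × ℝ → ℂ, Continuous d → (∀ p, ‖d p‖ ≤ M) →
      (∀ p : ℝ × ℝ, R < |p.1| → d p = 0) → IntegrableOn d T := by
    intro d hc hb hz
    set S : Set (ℝ × ℝ) := Set.Ioc (0:ℝ) R ×ˢ Set.Ioo (-π) π with hS
    have hSmeas : MeasurableSet S := measurableSet_Ioc.prod measurableSet_Ioo
    apply Integrable.mono' (g := S.indicator fun _ => M)
    · rw [integrable_indicator_iff hSmeas]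
      apply (integrableOn_const_iff (C := M)).mpr
      right
      calc (volume.restrict T) S ≤ volume S := Measure.restrict_apply_le _ _
      _ < ⊤ := hSfin
    · exact hc.aestronglyMeasurable
    · rw [ae_restrict_iff' hTmeas]
      apply Filter.Eventually.of_forall
      rintro ⟨r, θ⟩ ⟨hr, hθ⟩
      by_cases hrR : r ≤ R
      · have hmem : ((r, θ) : ℝ × ℝ) ∈ S := ⟨⟨hr, hrR⟩, hθ⟩
        rw [Set.indicator_of_mem hmem]
        exact hb _
      · push_neg at hrR
        have : |(r, θ).1| > R := by
          simp only [abs_of_pos (show (0:ℝ) < r from hr)]; exact hrR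
        rw [hz _ this]
        simp only [norm_zero]
        exact Set.indicator_apply_nonneg fun _ => hM0
  have hi₁ : IntegrableOn d₁ T := hintT d₁ hcont₁ habs₁ hzero₁
  have hi₂ : IntegrableOn d₂ T := hintT d₂ hcont₂ habs₂ hzero₂
  -- 1D integrability helper
  have hint1D : ∀ (g : ℝ → ℂ), Continuous g → (∀ r, ‖g r‖ ≤ M) →
      (∀ r : ℝ, R < |r| → g r = 0) → IntegrableOn g (Set.Ioi (0:ℝ)) := by
    intro g hc hb hz
    apply Integrable.mono' (g := (Set.Ioc (0:ℝ) R).indicator fun _ => M)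
    · rw [integrable_indicator_iff measurableSet_Ioc]
      apply (integrableOn_const_iff (C := M)).mpr
      right
      calc (volume.restrict (Set.Ioi (0:ℝ))) (Set.Ioc 0 R) ≤ volume (Set.Ioc (0:ℝ) R) :=
            Measure.restrict_apply_le _ _
      _ < ⊤ := by rw [Real.volume_Ioc]; exact ENNReal.ofReal_lt_top
    · exact hc.aestronglyMeasurable
    · rw [ae_restrict_iff' measurableSet_Ioi]
      apply Filter.Eventually.of_forall
      intro r hr
      by_cases hrR : r ≤ R
      · have hmem : r ∈ Set.Ioc (0:ℝ) R := ⟨hr, hrR⟩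
        rw [Set.indicator_of_mem hmem]
        exact hb _
      · push_neg at hrR
        rw [hz r (by rw [abs_of_pos hr]; exact hrR)]
        simp only [norm_zero]
        exact Set.indicator_apply_nonneg fun _ => hM0
  -- inner integral over r
  have inner₁ : ∀ θ : ℝ, ∫ r in Set.Ioi (0:ℝ), d₁ (r, θ) = -G 0 := by
    intro θ
    have hderiv : ∀ r ∈ Set.Ioi (0:ℝ), HasDerivAt (fun r : ℝ => G ((r:ℂ) * e θ)) (d₁ (r, θ)) r := by
      intro r _
      have h1 : HasDerivAt (fun r : ℝ => (r:ℂ) * e θ) (e θ) r := by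
        simpa using ((hasDerivAt_id r).ofReal_comp.mul_const (e θ))
      have h2 := (hG.differentiable (by simp) ((r:ℂ) * e θ)).hasFDerivAt
      exact h2.comp_hasDerivAt r h1
    have hcontG : ContinuousWithinAt (fun r : ℝ => G ((r:ℂ) * e θ)) (Set.Ici 0) 0 :=
      ((hG.continuous.comp ((Complex.continuous_ofReal).mul continuous_const))).continuousWithinAt
    have hintd : IntegrableOn (fun r => d₁ (r, θ)) (Set.Ioi (0:ℝ)) := by
      apply hint1D
      · exact hcont₁.comp (Continuous.prodMk_left θ)
      · intro r; exact habs₁ (r, θ)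
      · intro r hr; exact hzero₁ (r, θ) hr
    have htend : Filter.Tendsto (fun r : ℝ => G ((r:ℂ) * e θ)) Filter.atTop (nhds 0) := by
      apply Filter.Tendsto.congr' _ tendsto_const_nhds
      filter_upwards [Filter.eventually_ge_atTop (R + 1)] with r hr
      symm
      apply image_eq_zero_of_notMem_tsupport
      intro hmem
      have := hR hmem
      rw [Metric.mem_closedBall, dist_zero_right, norm_mul, he_norm,
        mul_one, Complex.norm_real, Real.norm_eq_abs] at this
      have : R + 1 ≤ R := le_trans hr (le_trans (le_abs_self r) this)
      linarith
    have := integral_Ioi_of_hasDerivAt_of_tendsto hcontG hderiv hintd htend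
    rw [this]
    simp
  -- inner integral over θ
  have inner₂ : ∀ r : ℝ, r ∈ Set.Ioi (0:ℝ) → ∫ θ in Set.Ioo (-π) π, d₂ (r, θ) = 0 := by
    intro r hr
    have hrC : (r:ℂ) ≠ 0 := Complex.ofReal_ne_zero.mpr (ne_of_gt hr)
    have hderiv : ∀ θ : ℝ, HasDerivAt (fun θ : ℝ => (Complex.I * (r:ℂ)⁻¹) * G ((r:ℂ) * e θ))
        (d₂ (r, θ)) θ := by
      intro θ
      have h1 : HasDerivAt (fun θ : ℝ => ((θ:ℂ) * Complex.I)) Complex.I θ := by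
        simpa using ((hasDerivAt_id θ).ofReal_comp.mul_const Complex.I)
      have h2 : HasDerivAt e (e θ * Complex.I) θ := h1.cexp
      have h3 : HasDerivAt (fun θ : ℝ => (r:ℂ) * e θ) ((r:ℂ) * (e θ * Complex.I)) θ :=
        h2.const_mul ((r:ℂ))
      have h4 := ((hG.differentiable (by simp) ((r:ℂ) * e θ)).hasFDerivAt).comp_hasDerivAt θ h3
      have h5 := h4.const_mul (Complex.I * (r:ℂ)⁻¹)
      have key2 : (Complex.I * (r:ℂ)⁻¹) * (D ((r:ℂ) * e θ) ((r:ℂ) * (e θ * Complex.I)))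
          = d₂ (r, θ) := by
        have hsm : (r:ℂ) * (e θ * Complex.I) = (r:ℝ) • (Complex.I * e θ) := by
          rw [Complex.real_smul]; ring
        rw [hsm, ContinuousLinearMap.map_smul, Complex.real_smul, hd₂]
        field_simp
      rw [← key2]
      exact h5
    have hcd : Continuous (fun θ : ℝ => d₂ (r, θ)) := hcont₂.comp (Continuous.prodMk_right r)
    rw [← integral_Ioc_eq_integral_Ioo,
      ← intervalIntegral.integral_of_le (by linarith [Real.pi_pos] : -π ≤ π)]
    rw [intervalIntegral.integral_eq_sub_of_hasDerivAt (fun θ _ => hderiv θ)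
      (hcd.intervalIntegrable _ _)]
    have heπ : e π = -1 := by
      rw [he]; exact Complex.exp_pi_mul_I
    have heπ' : e (-π) = -1 := by
      rw [he]
      push_cast
      rw [neg_mul, Complex.exp_neg, Complex.exp_pi_mul_I]
      norm_num
    rw [heπ, heπ']
    ring
  -- assemble
  have hT_eq : polarCoord.target = T := rfl
  calc ∫ z : ℂ, dbar G z * z⁻¹
      = ∫ p in polarCoord.target,
          p.1 • (dbar G (Complex.polarCoord.symm p) * (Complex.polarCoord.symm p)⁻¹) :=
        (Complex.integral_comp_polarCoord_symm _).symm
    _ = ∫ p in T, (1/2 : ℂ) * (d₁ p + d₂ p) := by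
        rw [hT_eq]
        exact setIntegral_congr_fun hTmeas key
    _ = (1/2 : ℂ) * ((∫ p in T, d₁ p) + ∫ p in T, d₂ p) := by
        simp_rw [← smul_eq_mul (α := ℂ)]
        rw [integral_smul]
        congr 1
        exact integral_add hi₁ hi₂
    _ = (1/2 : ℂ) * ((2 * π : ℝ) • (-G 0) + 0) := by
        congr 2
        · rw [setIntegral_prod_symm' d₁ hi₁]
          rw [setIntegral_congr_fun measurableSet_Ioo
            (fun θ _ => inner₁ θ)]
          rw [setIntegral_const, measureReal_def, Real.volume_Ioo]
          congr 1
          rw [ENNReal.toReal_ofReal (by linarith [Real.pi_pos])]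
          ring
        · rw [setIntegral_prod' d₂ hi₂]
          rw [setIntegral_congr_fun measurableSet_Ioi inner₂]
          simp
    _ = (-π : ℂ) * G 0 := by
        rw [Complex.real_smul]
        push_cast
        ring

theorem pompeiu (G : ℂ → ℂ) (hG : ContDiff ℝ (⊤ : ℕ∞) G) (hGc : HasCompactSupport G) (w : ℂ) :
    ∫ z : ℂ, dbar G z * (z - w)⁻¹ = (-π : ℂ) * G w := by
  set G' : ℂ → ℂ := fun z => G (z + w) with hG'
  have hG'c : ContDiff ℝ (⊤ : ℕ∞) G' := hG.comp (contDiff_id.add contDiff_const)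
  have hG'cs : HasCompactSupport G' := by
    apply HasCompactSupport.comp_homeomorph hGc (Homeomorph.addRight w)
  have hdbar : ∀ z : ℂ, dbar G' z = dbar G (z + w) := by
    intro z
    have hfd : fderiv ℝ G' z = fderiv ℝ G (z + w) := by
      have h1 : HasFDerivAt (fun z : ℂ => z + w) (ContinuousLinearMap.id ℝ ℂ) z := by
        simpa using (hasFDerivAt_id z).add_const w
      have h2 := ((hG.differentiable (by simp) (z + w)).hasFDerivAt).comp z h1
      have h3 : HasFDerivAt G' ((fderiv ℝ G (z + w)).comp (ContinuousLinearMap.id ℝ ℂ)) z := h2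
      rw [h3.fderiv]
      ext v
      simp
    rw [dbar, dbar, hfd]
  have htrans : ∫ z : ℂ, dbar G z * (z - w)⁻¹ = ∫ z : ℂ, dbar G (z + w) * z⁻¹ := by
    rw [← integral_add_right_eq_self (fun z : ℂ => dbar G z * (z - w)⁻¹) w]
    congr 1
    ext z
    rw [add_sub_cancel_right]
  rw [htrans]
  have := pompeiu_zero G' hG'c hG'cs
  simp_rw [hdbar] at this
  rw [this, hG']
  simp

set_option maxHeartbeats 1000000 in
/-- The Helffer–Sjöstrand formula: for a self-adjoint operator A and
f ∈ C_0^∞(ℝ) with almost analytic extension f̃,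
f(A) = -(1/π) ∫_ℂ ∂̄f̃(z) (z - A)⁻¹ dL(z). -/
theorem helffer_sjostrand {H : Type*} [NormedAddCommGroup H] [InnerProductSpace ℂ H]
    [CompleteSpace H]
    (A : H →L[ℂ] H) (hA : IsSelfAdjoint A)
    (f : ℝ → ℝ) (hf : ContDiff ℝ (⊤ : ℕ∞) f) (hfc : HasCompactSupport f)
    (F : ℂ → ℂ) (hF : ContDiff ℝ (⊤ : ℕ∞) F) (hFc : HasCompactSupport F)
    (hext : ∀ t : ℝ, F t = (f t : ℂ))
    (haa : ∀ n : ℕ, ∃ C : ℝ, ∀ z : ℂ, ‖dbar F z‖ ≤ C * |z.im| ^ n) :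
    cfc f A = (-(1/π) : ℝ) •
      ∫ z : ℂ, dbar F z • Ring.inverse ((z : ℂ) • (1 : H →L[ℂ] H) - A) := by
  classical
  -- the spectrum is real
  have hre : ∀ x ∈ spectrum ℂ A, Complex.im x = 0 := by
    intro x hx
    have h := hA.spectrumRestricts.rightInvOn hx
    rw [Complex.coe_algebraMap] at h
    exact_mod_cast congrArg Complex.im h.symm
  have hnotin : ∀ z : ℂ, z.im ≠ 0 → z ∉ spectrum ℂ A := fun z hz hmem => hz (hre z hmem)
  set Φ : C(spectrum ℂ A, ℂ) →⋆ₐ[ℂ] (H →L[ℂ] H) := cfcHom hA.isStarNormal with hΦ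
  set L : C(spectrum ℂ A, ℂ) →L[ℂ] (H →L[ℂ] H) :=
    { toLinearMap := Φ.toAlgHom.toLinearMap,
      cont := (cfcHom_isClosedEmbedding hA.isStarNormal).continuous } with hLdef
  have hLΦ : ∀ ψ, L ψ = Φ ψ := fun _ => rfl
  -- resolvent via cfc
  have hcontr' : ∀ z : ℂ, z ∉ spectrum ℂ A →
      Continuous (fun x : spectrum ℂ A => (z - (x : ℂ))⁻¹) := by
    intro z hz
    exact (continuous_const.sub continuous_subtype_val).inv₀
      (fun x => sub_ne_zero.mpr (fun h => hz ((show z = (x:ℂ) from h) ▸ x.2)))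
  have hres : ∀ (z : ℂ) (hz : z ∉ spectrum ℂ A),
      Ring.inverse (z • (1 : H →L[ℂ] H) - A) =
        Φ (⟨fun x : spectrum ℂ A => (z - (x : ℂ))⁻¹, hcontr' z hz⟩ : C(spectrum ℂ A, ℂ)) := by
    intro z hz
    set r : C(spectrum ℂ A, ℂ) := ⟨fun x : spectrum ℂ A => (z - (x : ℂ))⁻¹, _⟩
    set q : C(spectrum ℂ A, ℂ) :=
      algebraMap ℂ _ z - (ContinuousMap.id ℂ).restrict (spectrum ℂ A) with hq
    have hqr : q * r = 1 := by
      ext x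
      have hne : z - (x : ℂ) ≠ 0 := sub_ne_zero.mpr (fun h => hz (h ▸ x.2))
      simp [q, r, mul_inv_cancel₀ hne]
    have hrq : r * q = 1 := by rw [mul_comm]; exact hqr
    have hqΦ : Φ q = z • (1 : H →L[ℂ] H) - A := by
      simp only [hq, hΦ, map_sub, AlgHomClass.commutes, cfcHom_id hA.isStarNormal,
        Algebra.algebraMap_eq_smul_one, _root_.map_smul, _root_.map_one]
    have := Ring.inverse_unit (⟨Φ q, Φ r, by rw [← map_mul, hqr, map_one],
      by rw [← map_mul, hrq, map_one]⟩ : (H →L[ℂ] H)ˣ)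
    simpa [hqΦ] using this
  -- ∂̄F basics
  have hdbarc : Continuous (dbar F) := by
    have h1 : Continuous (fun z => fderiv ℝ F z) := hF.continuous_fderiv (by simp)
    exact continuous_const.mul ((h1.clm_apply continuous_const).add
      (continuous_const.mul (h1.clm_apply continuous_const)))
  have hdbar0 : ∀ z : ℂ, z ∉ tsupport F → dbar F z = 0 := by
    intro z hz
    have : z ∉ tsupport (fderiv ℝ F) := fun h => hz (tsupport_fderiv_subset ℝ h)
    have h0 : fderiv ℝ F z = 0 := image_eq_zero_of_notMem_tsupport this
    rw [dbar, h0]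
    simp
  obtain ⟨C, hC⟩ := haa 1
  set C' : ℝ := max C 0 with hC'
  have hC'0 : 0 ≤ C' := le_max_right _ _
  have hC'b : ∀ z : ℂ, ‖dbar F z‖ ≤ C' * |z.im| := by
    intro z
    calc ‖dbar F z‖ ≤ C * |z.im| ^ 1 := hC z
    _ ≤ C' * |z.im| := by
        rw [pow_one]
        exact mul_le_mul_of_nonneg_right (le_max_left _ _) (abs_nonneg _)
  -- null set of real axis
  have hnull : volume {z : ℂ | z.im = 0} = 0 := by
    have heq : {z : ℂ | z.im = 0} = (LinearMap.ker (Complex.imCLM.toLinearMap) : Set ℂ) := by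
      ext z; simp [LinearMap.mem_ker]
    rw [heq]
    apply Measure.addHaar_submodule
    intro h
    have h1 := LinearMap.ker_eq_top.mp h
    have h2 : Complex.imCLM.toLinearMap Complex.I = 0 := by rw [h1]; rfl
    simp at h2
  have hae : ∀ᵐ z : ℂ, z.im ≠ 0 := by
    rw [ae_iff]
    convert hnull using 2
    ext z
    simp
  -- the C(K,ℂ)-valued integrand
  have hcontr : ∀ z : ℂ, z.im ≠ 0 →
      Continuous (fun x : spectrum ℂ A => dbar F z * (z - (x : ℂ))⁻¹) := by
    intro z hz
    exact continuous_const.mul ((continuous_const.sub continuous_subtype_val).inv₀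
      (fun x => sub_ne_zero.mpr (fun h => hnotin z hz ((show z = (x:ℂ) from h) ▸ x.2))))
  set g : ℂ → C(spectrum ℂ A, ℂ) := fun z =>
    if hz : z.im ≠ 0 then ⟨fun x => dbar F z * (z - (x : ℂ))⁻¹, hcontr z hz⟩ else 0 with hg
  -- measurability
  set U : Set ℂ := {z : ℂ | z.im ≠ 0} with hU
  have hUopen : IsOpen U := isOpen_compl_iff.mpr (isClosed_eq Complex.continuous_im continuous_const)
  have hUrestrict : volume.restrict U = volume :=
    Measure.restrict_eq_self_of_ae_mem hae
  have hgU : ContinuousOn g U := by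
    rw [continuousOn_iff_continuous_restrict]
    have hres_eq : U.domRestrict g = fun z : U =>
        (⟨fun x => dbar F z.1 * ((z.1 : ℂ) - (x : ℂ))⁻¹, hcontr z.1 z.2⟩ : C(spectrum ℂ A, ℂ)) :=
      funext fun z => dif_pos z.2
    rw [hres_eq]
    apply ContinuousMap.continuous_of_continuous_uncurry
    apply Continuous.mul
    · exact hdbarc.comp (continuous_subtype_val.comp continuous_fst)
    · apply Continuous.inv₀
      · exact (continuous_subtype_val.comp continuous_fst).sub
          (continuous_subtype_val.comp continuous_snd)
      · rintro ⟨z, x⟩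
        have hz2 : (z : ℂ).im ≠ 0 := z.2
        exact sub_ne_zero.mpr (fun h => hz2 (by rw [h]; exact hre _ x.2))
  have hgmeas : AEStronglyMeasurable g volume := by
    rw [← hUrestrict]
    exact hgU.aestronglyMeasurable hUopen.measurableSet
  -- integrability
  have hgnorm : ∀ z : ℂ, ‖g z‖ ≤ (tsupport F).indicator (fun _ => C') z := by
    intro z
    by_cases hzF : z ∈ tsupport F
    · rw [Set.indicator_of_mem hzF]
      by_cases hz : z.im ≠ 0
      · rw [hg]
        simp only [dif_pos hz]
        rw [ContinuousMap.norm_le _ hC'0]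
        intro x
        show ‖dbar F z * (z - (x : ℂ))⁻¹‖ ≤ C'
        rw [norm_mul, norm_inv]
        have him : |z.im| ≤ ‖z - (x : ℂ)‖ := by
          have : (z - (x : ℂ)).im = z.im := by
            rw [Complex.sub_im, hre _ x.2, sub_zero]
          rw [← this]
          exact Complex.abs_im_le_norm _
        by_cases hzx : z - (x : ℂ) = 0
        · exfalso
          exact hnotin z hz (by rw [sub_eq_zero] at hzx; exact hzx ▸ x.2)
        · have h1 : (0:ℝ) < |z.im| := abs_pos.mpr hz
          calc ‖dbar F z‖ * ‖z - (x:ℂ)‖⁻¹ ≤ (C' * |z.im|) * |z.im|⁻¹ := by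
                apply mul_le_mul (hC'b z) _ (by positivity) (by positivity)
                exact inv_anti₀ h1 him
          _ = C' := by field_simp
      · rw [hg]
        simp only [dif_neg hz, norm_zero]
        exact hC'0
    · rw [Set.indicator_of_notMem hzF]
      have hz0 : dbar F z = 0 := hdbar0 z hzF
      rw [hg]
      by_cases hz : z.im ≠ 0
      · simp only [dif_pos hz]
        have : (⟨fun x => dbar F z * (z - (x : ℂ))⁻¹, hcontr z hz⟩ : C(spectrum ℂ A, ℂ)) = 0 := by
          ext x
          show dbar F z * _ = 0
          rw [hz0, zero_mul]
        rw [this, norm_zero]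
      · simp only [dif_neg hz, norm_zero]
        exact le_rfl
  have hgint : Integrable g := by
    apply Integrable.mono' (g := (tsupport F).indicator fun _ => C')
    · rw [integrable_indicator_iff (hFc.isCompact.isClosed.measurableSet)]
      apply (integrableOn_const_iff (C := C')).mpr
      right
      exact hFc.isCompact.measure_lt_top
    · exact hgmeas
    · exact Filter.Eventually.of_forall hgnorm
  -- integral equals L applied to C(K)-valued integral
  have hmain : (∫ z : ℂ, dbar F z • Ring.inverse ((z : ℂ) • (1 : H →L[ℂ] H) - A))
      = L (∫ z : ℂ, g z) := by
    rw [← ContinuousLinearMap.integral_comp_comm L hgint]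
    apply integral_congr_ae
    filter_upwards [hae] with z hz
    rw [hg]
    simp only [dif_pos hz]
    have hsm : (⟨fun x => dbar F z * (z - (x : ℂ))⁻¹, hcontr z hz⟩ : C(spectrum ℂ A, ℂ))
        = dbar F z • (⟨fun x : spectrum ℂ A => (z - (x : ℂ))⁻¹,
            hcontr' z (hnotin z hz)⟩ : C(spectrum ℂ A, ℂ)) := by
      ext x
      show dbar F z * _ = dbar F z * _
      rfl
    rw [hsm, hLΦ, _root_.map_smul, hres z (hnotin z hz)]
  rw [hmain]
  -- evaluate the C(K)-valued integral pointwise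
  set φ : C(spectrum ℂ A, ℂ) := ⟨fun x => ((f (x : ℂ).re : ℝ) : ℂ),
    Complex.continuous_ofReal.comp (hf.continuous.comp
      (Complex.continuous_re.comp continuous_subtype_val))⟩ with hφdef
  have hint_eq : (∫ z : ℂ, g z) = (-(π:ℝ) : ℂ) • φ := by
    ext x
    rw [ContinuousMap.integral_apply hgint]
    have hcongr : ∀ᵐ z : ℂ, g z x = dbar F z * (z - (x:ℂ))⁻¹ := by
      filter_upwards [hae] with z hz
      rw [hg]; simp only [dif_pos hz]; rfl
    rw [integral_congr_ae hcongr, pompeiu F hF hFc (x : ℂ)]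
    have hxim : (x : ℂ).im = 0 := hre _ x.2
    have hxre : ((x : ℂ).re : ℂ) = (x : ℂ) := Complex.ext (by simp) (by simp [hxim])
    show -(π:ℂ) * F (x:ℂ) = (-(π:ℝ) : ℂ) • φ x
    rw [← hxre, hext ((x:ℂ).re)]
    show -(π:ℂ) * (f (x:ℂ).re : ℂ) = (-(π:ℝ) : ℂ) • ((f (x:ℂ).re : ℝ) : ℂ)
    rw [smul_eq_mul]
  rw [hint_eq, _root_.map_smul]
  have hΦφ : L φ = cfc (fun x : ℂ => ((f x.re : ℝ) : ℂ)) A := by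
    rw [hLΦ, cfc_apply (fun x : ℂ => ((f x.re : ℝ) : ℂ)) A hA.isStarNormal
      (Continuous.continuousOn (Complex.continuous_ofReal.comp
        (hf.continuous.comp Complex.continuous_re)))]
    rfl
  rw [hΦφ, ← cfc_real_eq_complex f hA]
  have hs : ((-(1/π) : ℝ) • ((-(π:ℝ)) : ℂ)) = (1 : ℂ) := by
    rw [Complex.real_smul]
    have hpi : (π:ℂ) ≠ 0 := by exact_mod_cast Real.pi_ne_zero
    push_cast
    field_simp
  rw [← smul_assoc, hs, one_smul]
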